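/- arXiv:1203.5744 — 2 statements merged into one kernel-verified Lean document; each statement's English description precedes it below -/
import Mathlib

section
/- Let n ≤ m be positive integers, let B and Δ be nonempty open subsets of ℝ^m with B ⊆ Δ and B dense in Δ, and let f : Δ → ℝ^n be differentiable on Δ such that every point of B is a regular point of f (i.e., the derivative Df(t) is surjective for every t ∈ B). Then for any absolutely continuous probability measure μ on Δ (with respect to Lebesgue measure) satisfying μ(B) > 0, the pushforward measure μ ∘ f⁻¹ is not singular with respect to Lebesgue measure on ℝ^n. -/
/-!
Where `f` is uniformly close to a surjective linear map `A` with right inverse `R`, the map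
`y ↦ y + R (f y - A y)` is close to the identity, so it shrinks measures by at most a bounded
factor, and it sends each `y` into `A⁻¹ {f y}`. A set whose `f`-image is null is thus mapped into
the preimage of a null set under the surjective linear map `A`, which is null. Cutting the regular
points into countably many such pieces shows that the regular points sent into a null set form a
null set, which cannot carry the positive mass `μ B`.
-/

open MeasureTheory Measure Set
open scoped NNReal ENNReal

section

variable {E F : Type*} [NormedAddCommGroup E] [NormedSpace ℝ E] [FiniteDimensional ℝ E]
  [MeasurableSpace E] [BorelSpace E] (μ : Measure E) [μ.IsAddHaarMeasure]
  [NormedAddCommGroup F] [NormedSpace ℝ F]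
  [MeasurableSpace F] [BorelSpace F] {ν : Measure F} [ν.IsAddHaarMeasure]

theorem LinearMap.quasiMeasurePreserving_of_surjective (L : E →ₗ[ℝ] F)
    (hL : Function.Surjective L) : QuasiMeasurePreserving L μ ν := by
  refine ⟨L.continuous_of_finiteDimensional.measurable, ?_⟩
  obtain ⟨c, -, hc⟩ := L.exists_map_addHaar_eq_smul_addHaar μ ν hL
  rw [hc]
  exact AbsolutelyContinuous.rfl.smul_left c

variable [FiniteDimensional ℝ F]

theorem exists_addHaar_eq_zero_of_approximatesLinearOn_of_surjective (A : E →L[ℝ] F)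
    (hA : Function.Surjective A) :
    ∃ δ : ℝ≥0, 0 < δ ∧ ∀ (t : Set E) (f : E → F),
      ApproximatesLinearOn f A t δ → ν (f '' t) = 0 → μ t = 0 := by
  obtain ⟨R, hR⟩ := A.exists_rightInverse_of_surjective (LinearMap.range_eq_top.2 hA)
  obtain ⟨δ₀, hδ₀, hδ₀_pos⟩ :=
    ((mul_le_addHaar_image_of_lt_det μ (ContinuousLinearMap.id ℝ E) (m := 2⁻¹)
      (by simp [ContinuousLinearMap.det])).and self_mem_nhdsWithin).exists
  refine ⟨δ₀ / (‖R‖₊ + 1), by positivity, fun t f hf hft => ?_⟩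
  let H : E → E := fun y => y + R (f y - A y)
  have hAH : ∀ y, A (H y) = f y := fun y => by
    simp [H, show ∀ z, A (R z) = z from fun z => congr($hR z)]
  have hH : ApproximatesLinearOn H (ContinuousLinearMap.id ℝ E) t δ₀ := by
    intro x hx y hy
    calc ‖H x - H y - (x - y)‖ = ‖R (f x - f y - A (x - y))‖ := by
          simp only [H, map_sub]; abel_nf
      _ ≤ ‖R‖ * (δ₀ / (‖R‖₊ + 1) * ‖x - y‖) :=
          (R.le_opNorm _).trans (by gcongr; exact hf x hx y hy)
      _ ≤ δ₀ * ‖x - y‖ := by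
          have hRδ : ‖R‖ * (δ₀ / (‖R‖ + 1)) ≤ (δ₀ : ℝ) := by
            rw [mul_div_assoc', div_le_iff₀ (by positivity)]
            nlinarith [δ₀.2]
          push_cast
          rw [← mul_assoc]
          gcongr
  have hHt : μ (H '' t) = 0 := by
    refine measure_mono_null ?_
      ((A : E →ₗ[ℝ] F).quasiMeasurePreserving_of_surjective μ hA |>.preimage_null hft)
    rintro _ ⟨y, hy, rfl⟩
    exact ⟨y, hy, (hAH y).symm⟩
  simpa [hHt] using hδ₀ t H hH

theorem addHaar_eq_zero_of_addHaar_image_eq_zero_of_surjective {f : E → F}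
    {f' : E → E →L[ℝ] F} {s : Set E} (hf' : ∀ x ∈ s, HasFDerivWithinAt f (f' x) s x)
    (hsurj : ∀ x ∈ s, Function.Surjective (f' x)) (hs : ν (f '' s) = 0) : μ s = 0 := by
  have hδ : ∀ A : E →L[ℝ] F, ∃ δ : ℝ≥0, 0 < δ ∧
      (Function.Surjective A → ∀ (t : Set E) (g : E → F),
        ApproximatesLinearOn g A t δ → ν (g '' t) = 0 → μ t = 0) := by
    intro A
    by_cases hA : Function.Surjective A
    · obtain ⟨δ, hδ_pos, hδ⟩ :=
        exists_addHaar_eq_zero_of_approximatesLinearOn_of_surjective μ (ν := ν) A hA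
      exact ⟨δ, hδ_pos, fun _ => hδ⟩
    · exact ⟨1, one_pos, fun h => absurd h hA⟩
  choose r hr_pos hr using hδ
  obtain ⟨t, A, -, -, hst, happrox, hA⟩ :=
    exists_partition_approximatesLinearOn_of_hasFDerivWithinAt f s f' hf' r fun A => (hr_pos A).ne'
  rcases s.eq_empty_or_nonempty with rfl | hne
  · exact measure_empty
  refine measure_mono_null ((subset_inter subset_rfl hst).trans (inter_iUnion s t).subset)
    (measure_iUnion_null fun n => ?_)
  obtain ⟨y, hy, hAy⟩ := hA hne n
  exact hr _ (hAy ▸ hsurj y hy) _ f (happrox n)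
    (measure_mono_null (image_mono inter_subset_left) hs)

end

theorem stmt0_general {n m : ℕ}
    (B Δ : Set (Fin m → ℝ)) (hΔopen : IsOpen Δ) (hBΔ : B ⊆ Δ)
    (f : (Fin m → ℝ) → (Fin n → ℝ)) (hfm : Measurable f)
    (hf : DifferentiableOn ℝ f Δ)
    (hreg : ∀ t ∈ B, Function.Surjective (fderiv ℝ f t))
    (μ : Measure (Fin m → ℝ))
    (hμac : μ ≪ volume) (hμB : 0 < μ B) :
    ¬ (μ.map f) ⟂ₘ (volume : Measure (Fin n → ℝ)) := by
  rintro ⟨S, hS, hμS, hS_null⟩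
  rw [Measure.map_apply hfm hS] at hμS
  have hT_null : volume (B ∩ f ⁻¹' Sᶜ) = 0 :=
    addHaar_eq_zero_of_addHaar_image_eq_zero_of_surjective volume (f' := fderiv ℝ f)
      (fun x hx => (hf.differentiableAt (hΔopen.mem_nhds (hBΔ hx.1))).hasFDerivAt
        |>.hasFDerivWithinAt)
      (fun x hx => hreg x hx.1)
      (measure_mono_null ((image_mono inter_subset_right).trans (image_preimage_subset f _))
        hS_null)
  have hB : B ⊆ (B ∩ f ⁻¹' Sᶜ) ∪ f ⁻¹' S := fun x hx => by
    by_cases h : f x ∈ S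
    exacts [Or.inr h, Or.inl ⟨hx, h⟩]
  exact hμB.ne' (measure_mono_null hB (measure_union_null (hμac hT_null) hμS))

/-- If `f` is differentiable on an open set `Δ ⊆ ℝ^m` with a dense open subset `B` of regular
points (surjective derivative onto `ℝ^n`, `n ≤ m`), then the pushforward under `f` of any
absolutely continuous probability measure `μ` supported on `Δ` with `μ(B) > 0` is not singular
with respect to Lebesgue measure on `ℝ^n`. -/
theorem stmt0 {n m : ℕ} (hn : 0 < n) (hnm : n ≤ m)
    (B Δ : Set (Fin m → ℝ)) (hBopen : IsOpen B) (hΔopen : IsOpen Δ)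
    (hBne : B.Nonempty) (hΔne : Δ.Nonempty) (hBΔ : B ⊆ Δ) (hdense : Δ ⊆ closure B)
    (f : (Fin m → ℝ) → (Fin n → ℝ)) (hfm : Measurable f)
    (hf : DifferentiableOn ℝ f Δ)
    (hreg : ∀ t ∈ B, Function.Surjective (fderiv ℝ f t))
    (μ : Measure (Fin m → ℝ)) [IsProbabilityMeasure μ]
    (hμac : μ ≪ volume) (hμΔ : μ Δᶜ = 0) (hμB : 0 < μ B) :
    ¬ (μ.map f) ⟂ₘ (volume : Measure (Fin n → ℝ)) :=
  stmt0_general B Δ hΔopen hBΔ f hfm hf hreg μ hμac hμB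
end

section
/- Let B ⊆ ℝ^m be open and let f : B → ℝ^m be a Borel function differentiable almost everywhere on B such that the set {t ∈ B : det Df(t) = 0} has Lebesgue measure zero. If μ is a measure on B absolutely continuous with respect to Lebesgue measure, then the pushforward μ ∘ f⁻¹ is absolutely continuous with respect to Lebesgue measure on ℝ^m. -/
/-!
On a piece of the domain where `f` is uniformly close to an invertible linear map `A`, `f`
shrinks volumes by at most a fixed positive factor, so `f`-preimages of null sets meet that
piece in a null set. Countably many such pieces cover the set where `f` is differentiable with
invertible derivative; outside that set there is only a null set, which `μ` does not see.
-/

open MeasureTheory Set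
open scoped NNReal ENNReal

namespace MeasureTheory

variable {E : Type*} [NormedAddCommGroup E] [NormedSpace ℝ E] [FiniteDimensional ℝ E]
  [MeasurableSpace E] [BorelSpace E] (μ : Measure E) [μ.IsAddHaarMeasure]

theorem exists_pos_forall_null_of_null_image_of_approximatesLinearOn {A : E →L[ℝ] E}
    (hA : A.det ≠ 0) :
    ∃ δ : ℝ≥0, 0 < δ ∧
      ∀ (s : Set E) (f : E → E), ApproximatesLinearOn f A s δ → μ (f '' s) = 0 → μ s = 0 := by
  set m : ℝ≥0 := ‖A.det‖₊ / 2
  have hm_pos : 0 < m := div_pos (nnnorm_pos.2 hA) two_pos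
  have hm_lt : (m : ℝ≥0∞) < ENNReal.ofReal |A.det| := by
    rw [← Real.norm_eq_abs, ← coe_nnnorm, ENNReal.ofReal_coe_nnreal, ENNReal.coe_lt_coe]
    exact NNReal.half_lt_self (nnnorm_ne_zero_iff.2 hA)
  obtain ⟨δ, hδ, δ_pos⟩ :=
    ((mul_le_addHaar_image_of_lt_det μ A hm_lt).and self_mem_nhdsWithin).exists
  refine ⟨δ, δ_pos, fun s f hf himage => ?_⟩
  have hle : (m : ℝ≥0∞) * μ s ≤ 0 := himage ▸ hδ s f hf
  simpa [hm_pos.ne'] using hle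

theorem addHaar_inter_preimage_eq_zero_of_det_ne_zero {f : E → E} {f' : E → E →L[ℝ] E}
    {s : Set E} (hf' : ∀ x ∈ s, HasFDerivWithinAt f (f' x) s x)
    (hdet : ∀ x ∈ s, (f' x).det ≠ 0) {Z : Set E} (hZ : μ Z = 0) :
    μ (s ∩ f ⁻¹' Z) = 0 := by
  rcases s.eq_empty_or_nonempty with rfl | hs
  · simp
  have hδ : ∀ A : E →L[ℝ] E, ∃ δ : ℝ≥0, δ ≠ 0 ∧ (A.det ≠ 0 → ∀ (u : Set E) (g : E → E),
      ApproximatesLinearOn g A u δ → μ (g '' u) = 0 → μ u = 0) := by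
    intro A
    by_cases hA : A.det = 0
    · exact ⟨1, one_ne_zero, fun h => absurd hA h⟩
    · obtain ⟨δ, δ_pos, h⟩ := exists_pos_forall_null_of_null_image_of_approximatesLinearOn μ hA
      exact ⟨δ, δ_pos.ne', fun _ => h⟩
  choose r r_ne hr using hδ
  obtain ⟨t, A, -, -, s_cover, hfA, hA⟩ :=
    exists_partition_approximatesLinearOn_of_hasFDerivWithinAt f s f' hf' r r_ne
  have hsub : s ∩ f ⁻¹' Z ⊆ ⋃ n, s ∩ t n ∩ f ⁻¹' Z := fun x hx => by
    obtain ⟨n, hn⟩ := mem_iUnion.1 (s_cover hx.1)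
    exact mem_iUnion.2 ⟨n, ⟨hx.1, hn⟩, hx.2⟩
  refine measure_mono_null hsub (measure_iUnion_null fun n => ?_)
  obtain ⟨y, hy, hAy⟩ := hA hs n
  refine hr (A n) (hAy ▸ hdet y hy) _ f ((hfA n).mono_set inter_subset_left) ?_
  exact measure_mono_null (image_subset_iff.2 inter_subset_right) hZ

variable {μ} in
theorem Measure.AbsolutelyContinuous.map_of_ae_hasFDerivAt_det_ne_zero {ν : Measure E}
    (hν : ν ≪ μ) {f : E → E} {f' : E → E →L[ℝ] E}
    (hf : ∀ᵐ x ∂ν, HasFDerivAt f (f' x) x ∧ (f' x).det ≠ 0) :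
    ν.map f ≪ μ := by
  by_cases hmeas : AEMeasurable f ν
  swap
  · simp [Measure.map_of_not_aemeasurable hmeas]
  refine Measure.AbsolutelyContinuous.mk fun Z hZ hμZ => ?_
  rw [Measure.map_apply_of_aemeasurable hmeas hZ]
  set s := {x | HasFDerivAt f (f' x) x ∧ (f' x).det ≠ 0}
  have hgood : μ (s ∩ f ⁻¹' Z) = 0 :=
    addHaar_inter_preimage_eq_zero_of_det_ne_zero μ
      (fun x hx => hx.1.hasFDerivWithinAt) (fun x hx => hx.2) hμZ
  have hsub : f ⁻¹' Z ⊆ (s ∩ f ⁻¹' Z) ∪ sᶜ := fun x hx =>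
    (em (x ∈ s)).imp (fun hxs => ⟨hxs, hx⟩) id
  exact measure_mono_null hsub (measure_union_null (hν hgood) (ae_iff.1 hf))

end MeasureTheory

theorem stmt1_general {m : ℕ} (B : Set (Fin m → ℝ))
    (f : (Fin m → ℝ) → (Fin m → ℝ))
    (f' : (Fin m → ℝ) → ((Fin m → ℝ) →L[ℝ] (Fin m → ℝ)))
    (hdiff : ∀ᵐ t ∂(volume.restrict B), HasFDerivAt f (f' t) t)
    (hdet : volume {t ∈ B | (f' t).det = 0} = 0)
    (μ : Measure (Fin m → ℝ)) (hμac : μ ≪ volume) (hμB : μ Bᶜ = 0) :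
    μ.map f ≪ (volume : Measure (Fin m → ℝ)) := by
  have hB : ∀ᵐ t ∂μ, t ∈ B := ae_iff.2 hμB
  have hμB_ac : μ ≪ volume.restrict B := by
    simpa only [Measure.restrict_eq_self_of_ae_mem hB] using hμac.restrict B
  have hdet_ne : ∀ᵐ t ∂μ, t ∈ B → (f' t).det ≠ 0 :=
    ae_iff.2 (hμac (by simpa only [Classical.not_imp, not_not] using hdet))
  refine hμac.map_of_ae_hasFDerivAt_det_ne_zero (f' := f') ?_
  filter_upwards [hμB_ac.ae_le hdiff, hdet_ne, hB] with t hdiff_t hdet_t ht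
  exact ⟨hdiff_t, hdet_t ht⟩

/-- If `f : B → ℝ^m` is a Borel function differentiable almost everywhere on an open set
`B ⊆ ℝ^m` with derivative `f'`, such that the set of points of `B` where the Jacobian
determinant vanishes has Lebesgue measure zero, then the pushforward under `f` of any measure
`μ` concentrated on `B` and absolutely continuous with respect to Lebesgue measure is again
absolutely continuous with respect to Lebesgue measure. -/
theorem stmt1 {m : ℕ} (B : Set (Fin m → ℝ)) (hBopen : IsOpen B)
    (f : (Fin m → ℝ) → (Fin m → ℝ)) (hfm : Measurable f)
    (f' : (Fin m → ℝ) → ((Fin m → ℝ) →L[ℝ] (Fin m → ℝ)))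
    (hdiff : ∀ᵐ t ∂(volume.restrict B), HasFDerivAt f (f' t) t)
    (hdet : volume {t ∈ B | (f' t).det = 0} = 0)
    (μ : Measure (Fin m → ℝ)) (hμac : μ ≪ volume) (hμB : μ Bᶜ = 0) :
    μ.map f ≪ (volume : Measure (Fin m → ℝ)) :=
  stmt1_general B f f' hdiff hdet μ hμac hμB
end
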